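/- arXiv:1303.3807 — 3 statements merged into one kernel-verified Lean document; each statement's English description precedes it below -/
import Mathlib

section
/- Let m ≥ 2 and A = [μ_{ij}] be an m×m matrix over a field such that whenever i' < i and j' < j and μ_{ij} ≠ 0, one has μ_{ij'} ≠ 0 and μ_{i'j} ≠ 0 (staircase zero pattern), and such that all nonzero entries are distinct powers of a fixed element α with exponent of μ_{ij} equal to 2^{c(i,j)} where c is strictly increasing in each of i and j on the support. If the determinant of A has at least one nontrivial term, then among all nonzero permutation terms α^{Σ_t 2^{c(t,σ(t))}} there is a unique permutation σ̄ attaining the maximal total exponent. -/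
/-- Let A be an m×m matrix (m ≥ 2) over a field whose entries are
either 0 or distinct powers α^{2^{c(i,j)}} of a fixed element α, with a staircase
zero pattern, and with c strictly increasing in each index on the support.
If det A has a nontrivial term, then there is a unique permutation with all
factors nonzero attaining the maximal total exponent Σ_t 2^{c(t,σ(t))}. -/
theorem stmt5 {F : Type*} [Field F] {m : ℕ} (hm : 2 ≤ m) (α : F)
    (A : Matrix (Fin m) (Fin m) F) (c : Fin m → Fin m → ℕ)
    (hform : ∀ i j, A i j = 0 ∨ A i j = α ^ (2 ^ (c i j)))
    (hstair : ∀ i i' j j' : Fin m, i' < i → j' < j → A i j ≠ 0 →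
      A i j' ≠ 0 ∧ A i' j ≠ 0)
    (hrow : ∀ i i' j : Fin m, i' < i → A i j ≠ 0 → A i' j ≠ 0 → c i' j < c i j)
    (hcol : ∀ i j j' : Fin m, j' < j → A i j ≠ 0 → A i j' ≠ 0 → c i j' < c i j)
    (hdistinct : ∀ i j i' j' : Fin m, A i j ≠ 0 → A i' j' ≠ 0 →
      c i j = c i' j' → i = i' ∧ j = j')
    (hnontriv : ∃ σ : Equiv.Perm (Fin m), ∀ t, A t (σ t) ≠ 0) :
    ∃! σmax : Equiv.Perm (Fin m), (∀ t, A t (σmax t) ≠ 0) ∧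
      ∀ σ : Equiv.Perm (Fin m), (∀ t, A t (σ t) ≠ 0) →
        (∑ t : Fin m, 2 ^ (c t (σ t))) ≤ ∑ t : Fin m, 2 ^ (c t (σmax t)) := by
  classical
  -- key: two valid permutations with equal sums are equal
  have key : ∀ σ τ : Equiv.Perm (Fin m), (∀ t, A t (σ t) ≠ 0) → (∀ t, A t (τ t) ≠ 0) →
      (∑ t : Fin m, 2 ^ (c t (σ t))) = (∑ t : Fin m, 2 ^ (c t (τ t))) → σ = τ := by
    intro σ τ hσ hτ hsum
    have hinjσ : Function.Injective (fun t => c t (σ t)) := by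
      intro a b hab
      exact (hdistinct a (σ a) b (σ b) (hσ a) (hσ b) hab).1
    have hinjτ : Function.Injective (fun t => c t (τ t)) := by
      intro a b hab
      exact (hdistinct a (τ a) b (τ b) (hτ a) (hτ b) hab).1
    have himg : Finset.univ.image (fun t => c t (σ t)) =
        Finset.univ.image (fun t => c t (τ t)) := by
      have h1 : ∑ n ∈ Finset.univ.image (fun t => c t (σ t)), 2 ^ n
          = ∑ t : Fin m, 2 ^ (c t (σ t)) :=
        Finset.sum_image (fun a _ b _ h => hinjσ h)
      have h2 : ∑ n ∈ Finset.univ.image (fun t => c t (τ t)), 2 ^ n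
          = ∑ t : Fin m, 2 ^ (c t (τ t)) :=
        Finset.sum_image (fun a _ b _ h => hinjτ h)
      have := congrArg Nat.bitIndices (h1.trans (hsum.trans h2.symm))
      have h3 := Finset.toFinset_bitIndices_twoPowSum (Finset.univ.image (fun t => c t (σ t)))
      have h4 := Finset.toFinset_bitIndices_twoPowSum (Finset.univ.image (fun t => c t (τ t)))
      rw [← h3, ← h4, this]
    ext t
    have ht : c t (σ t) ∈ Finset.univ.image (fun t => c t (τ t)) := by
      rw [← himg]; exact Finset.mem_image_of_mem _ (Finset.mem_univ t)
    obtain ⟨t', -, ht'⟩ := Finset.mem_image.1 ht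
    obtain ⟨rfl, h2⟩ := hdistinct t (σ t) t' (τ t') (hσ t) (hτ t') ht'.symm
    exact congrArg Fin.val h2
  -- existence of a maximizer
  obtain ⟨σ₀, hσ₀⟩ := hnontriv
  obtain ⟨σmax, hmem, hmax⟩ := Finset.exists_max_image
    (Finset.univ.filter fun σ : Equiv.Perm (Fin m) => ∀ t, A t (σ t) ≠ 0)
    (fun σ => ∑ t : Fin m, 2 ^ (c t (σ t)))
    ⟨σ₀, Finset.mem_filter.2 ⟨Finset.mem_univ _, hσ₀⟩⟩
  have hmemv := (Finset.mem_filter.1 hmem).2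
  refine ⟨σmax, ⟨hmemv, fun σ hσ =>
    hmax σ (Finset.mem_filter.2 ⟨Finset.mem_univ _, hσ⟩)⟩, ?_⟩
  rintro σ ⟨hσ, hσmax⟩
  exact key σ σmax hσ hmemv
    (le_antisymm (hmax σ (Finset.mem_filter.2 ⟨Finset.mem_univ _, hσ⟩)) (hσmax σmax hmemv))
end

section
/- Let C be an (n,k) convolutional code (a rank-k F[z]-submodule of F[z]^n given as the kernel of a full-row-rank polynomial parity check matrix H(z) = Σ H_i z^i). For every j ≥ 0, the j-th column distance satisfies d_j^c(C) ≤ (j+1)(n−k) + 1. -/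
/-- The truncated sliding parity-check matrix: the (j+1)(n-k) × (j+1)n lower
block triangular Toeplitz matrix whose block (r,s) equals H_{r-s} for r ≥ s and
0 otherwise, built from the coefficients H_0, H_1, ... of H(z). -/
def slidingParity {F : Type*} [Field F] (n k : ℕ) (hk : k < n)
    (H : ℕ → Matrix (Fin (n - k)) (Fin n) F) (j : ℕ) :
    Matrix (Fin ((j + 1) * (n - k))) (Fin ((j + 1) * n)) F :=
  Matrix.of fun a b =>
    if (b : ℕ) / n ≤ (a : ℕ) / (n - k) then
      H ((a : ℕ) / (n - k) - (b : ℕ) / n)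
        ⟨(a : ℕ) % (n - k), Nat.mod_lt _ (by omega)⟩
        ⟨(b : ℕ) % n, Nat.mod_lt _ (by omega)⟩
    else 0

/-- Hamming weight of a vector. -/
noncomputable def hammingWt {F : Type*} {ι : Type*} [Zero F] (v : ι → F) : ℕ :=
  Nat.card {i // v i ≠ 0}

/-- The j-th column distance: the minimal Hamming weight of a truncated codeword
(v_0,...,v_j) ∈ F^{(j+1)n} lying in the kernel of the sliding parity-check
matrix and with v_0 ≠ 0 (i.e. nonzero in the first block of n coordinates). -/
noncomputable def colDist {F : Type*} [Field F] (n k : ℕ) (hk : k < n)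
    (H : ℕ → Matrix (Fin (n - k)) (Fin n) F) (j : ℕ) : ℕ :=
  sInf {w | ∃ v : Fin ((j + 1) * n) → F,
    Matrix.mulVec (slidingParity n k hk H j) v = 0 ∧
    (∃ t : Fin ((j + 1) * n), (t : ℕ) < n ∧ v t ≠ 0) ∧
    hammingWt v = w}

/-!
Since `H 0` has full row rank, some set `s` of at most `n - k` of its columns spans `F^(n-k)`,
and as `k > 0` there is a column `c` outside `s`. Start from the unit vector `e_c` in block `0`
and solve the block triangular system `∑_{l ≤ i} H_(i-l) v_l = 0` one block at a time, each time
cancelling the accumulated syndrome by a vector supported on `s`. The truncated codeword obtained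
has `v_0 c = 1` and at most `#s` nonzero entries per block besides the one at `c`.
-/

open Finset Matrix

theorem Matrix.exists_finset_card_le_of_rank_eq {F ι κ : Type*} [Field F] [Fintype ι]
    [Fintype κ] (A : Matrix ι κ F) (hA : A.rank = Fintype.card ι) :
    ∃ s : Finset κ, #s ≤ Fintype.card ι ∧ ∀ t, ∃ x, (∀ q ∉ s, x q = 0) ∧ A *ᵥ x = t := by
  classical
  have hspan : Submodule.span F (Set.range A.col) = ⊤ := by
    rw [← range_mulVecLin]
    exact Submodule.eq_top_of_finrank_eq
      (by rw [← Matrix.rank, hA, Module.finrank_fintype_fun_eq_card])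
  obtain ⟨b, -, -, hb_span, hb_indep⟩ :=
    exists_linearIndepOn_extension (linearIndepOn_empty F A.col) (Set.empty_subset Set.univ)
  refine ⟨b.toFinset, ?_, fun t => ?_⟩
  · rw [Set.toFinset_card]
    exact hb_indep.fintype_card_le_finrank.trans_eq (Module.finrank_fintype_fun_eq_card F)
  · have ht : t ∈ Submodule.span F (A.col '' b) := by
      rw [← Submodule.span_le, Set.image_univ, hspan] at hb_span
      exact hb_span Submodule.mem_top
    obtain ⟨l, hl_supp, rfl⟩ := Finsupp.mem_span_image_iff_linearCombination F |>.mp ht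
    refine ⟨l, fun q hq => Finsupp.notMem_support_iff.mp fun h => hq ?_, ?_⟩
    · simpa using hl_supp h
    · ext r
      simp [Finsupp.linearCombination_apply, Finsupp.sum_fintype, mulVec, dotProduct, mul_comm]

theorem hammingWt_eq_hammingNorm {α ι : Type*} [Zero α] [DecidableEq α] [Fintype ι]
    (v : ι → α) : hammingWt v = hammingNorm v := by
  rw [hammingWt, Nat.card_eq_fintype_card, Fintype.card_subtype, hammingNorm]

theorem hammingNorm_pi_single {ι α : Type*} [Fintype ι] [DecidableEq ι] [Zero α] [DecidableEq α]
    (i : ι) {a : α} (ha : a ≠ 0) : hammingNorm (Pi.single i a : ι → α) = 1 := by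
  simp [hammingNorm, Pi.single_apply, ha, filter_eq']

section ConvolutionKernel

variable {F ι κ : Type*} [Field F] [Fintype κ]

noncomputable def convSolution (H : ℕ → Matrix ι κ F) (sol : (ι → F) → κ → F)
    (base : ℕ → κ → F) : ℕ → κ → F
  | i => base i + sol (-(∑ l ∈ (range i).attach, H (i - l) *ᵥ convSolution H sol base l)
      - H 0 *ᵥ base i)
decreasing_by exact mem_range.mp l.2

variable (H : ℕ → Matrix ι κ F) (sol : (ι → F) → κ → F) (base : ℕ → κ → F)

theorem convSolution_conv_eq_zero (hsol : ∀ t, H 0 *ᵥ sol t = t) (i : ℕ) :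
    ∑ l ∈ range (i + 1), H (i - l) *ᵥ convSolution H sol base l = 0 := by
  rw [sum_range_succ, Nat.sub_self, convSolution, mulVec_add, hsol,
    sum_attach (range i) fun l => H (i - l) *ᵥ convSolution H sol base l]
  abel

theorem convSolution_apply_of_notMem {s : Finset κ} (hsol : ∀ t, ∀ q ∉ s, sol t q = 0)
    {q : κ} (hq : q ∉ s) (i : ℕ) : convSolution H sol base i q = base i q := by
  rw [convSolution, Pi.add_apply, hsol _ q hq, add_zero]

theorem hammingNorm_convSolution_le [DecidableEq F] {s : Finset κ}
    (hsol : ∀ t, ∀ q ∉ s, sol t q = 0) (i : ℕ) :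
    hammingNorm (convSolution H sol base i) ≤ #s + hammingNorm (base i) := by
  classical
  refine (card_le_card fun q hq => ?_).trans (card_union_le s _)
  by_cases hqs : q ∈ s
  · exact mem_union_left _ hqs
  · exact mem_union_right _
      (by simpa [hammingNorm, convSolution_apply_of_notMem H sol base hsol hqs] using hq)

end ConvolutionKernel

section BlockVectors

def blockVec {α : Type*} {n : ℕ} (u : ℕ → Fin n → α) (j : ℕ) : Fin ((j + 1) * n) → α :=
  fun a => u a.divNat a.modNat

@[simp]
theorem blockVec_finProdFinEquiv {α : Type*} {n : ℕ} (u : ℕ → Fin n → α) (j : ℕ)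
    (p : Fin (j + 1)) (q : Fin n) : blockVec u j (finProdFinEquiv (p, q)) = u p q := by
  obtain ⟨hp, hq⟩ := Prod.ext_iff.mp (finProdFinEquiv_symm_apply (finProdFinEquiv (p, q)))
  simp only [Equiv.symm_apply_apply] at hp hq
  rw [blockVec, ← hp, ← hq]

theorem hammingNorm_blockVec {α : Type*} [Zero α] [DecidableEq α] {n : ℕ}
    (u : ℕ → Fin n → α) (j : ℕ) :
    hammingNorm (blockVec u j) = ∑ p : Fin (j + 1), hammingNorm (u p) := by
  simp only [hammingNorm, card_filter]
  rw [← finProdFinEquiv.sum_comp, Fintype.sum_prod_type]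
  simp

variable {F : Type*} [Field F] (n k : ℕ) (hk : k < n) (H : ℕ → Matrix (Fin (n - k)) (Fin n) F)
  (j : ℕ)

theorem slidingParity_finProdFinEquiv (r p : Fin (j + 1)) (i : Fin (n - k)) (q : Fin n) :
    slidingParity n k hk H j (finProdFinEquiv (r, i)) (finProdFinEquiv (p, q)) =
      if (p : ℕ) ≤ r then H (r - p) i q else 0 := by
  have hdiv {m : ℕ} (x : Fin (j + 1)) (y : Fin m) : (finProdFinEquiv (x, y) : ℕ) / m = x :=
    congrArg Fin.val (congrArg Prod.fst (finProdFinEquiv.symm_apply_apply (x, y)))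
  have hmod {m : ℕ} (x : Fin (j + 1)) (y : Fin m) : (finProdFinEquiv (x, y) : ℕ) % m = y :=
    congrArg Fin.val (congrArg Prod.snd (finProdFinEquiv.symm_apply_apply (x, y)))
  simp only [slidingParity, of_apply, hdiv, hmod, Fin.eta]

theorem slidingParity_mulVec_blockVec (u : ℕ → Fin n → F) (r : Fin (j + 1)) (i : Fin (n - k)) :
    (slidingParity n k hk H j *ᵥ blockVec u j) (finProdFinEquiv (r, i)) =
      (∑ l ∈ range (r + 1), H (r - l) *ᵥ u l) i := by
  have hrange : range (r + 1) = (range (j + 1)).filter (· ≤ (r : ℕ)) := by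
    ext l; simp only [mem_range, mem_filter]; omega
  rw [mulVec, dotProduct, ← finProdFinEquiv.sum_comp, Fintype.sum_prod_type, Finset.sum_apply,
    hrange, sum_filter, ← Fin.sum_univ_eq_sum_range (fun l => if l ≤ (r : ℕ) then _ else 0)]
  refine sum_congr rfl fun p _ => ?_
  simp only [slidingParity_finProdFinEquiv, blockVec_finProdFinEquiv, ite_mul, zero_mul]
  split_ifs <;> simp [mulVec, dotProduct]

end BlockVectors

/-- For an (n,k) convolutional code given by a full-row-rank
parity-check matrix H(z) = Σ H_i z^i (in particular H_0 has full row rank n-k),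
the j-th column distance satisfies d_j^c ≤ (j+1)(n-k) + 1 for every j ≥ 0. -/
theorem stmt10 {F : Type*} [Field F] (n k : ℕ) (hk0 : 0 < k) (hk : k < n)
    (H : ℕ → Matrix (Fin (n - k)) (Fin n) F)
    (hrank : (H 0).rank = n - k) (j : ℕ) :
    colDist n k hk H j ≤ (j + 1) * (n - k) + 1 := by
  classical
  obtain ⟨s, hs_card, hs⟩ := (H 0).exists_finset_card_le_of_rank_eq (by rwa [Fintype.card_fin])
  rw [Fintype.card_fin] at hs_card
  choose sol hsol_supp hsol using hs
  obtain ⟨c, -, hc⟩ : ∃ c ∈ univ, c ∉ s :=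
    exists_mem_notMem_of_card_lt_card (by rw [card_univ, Fintype.card_fin]; omega)
  set base : ℕ → Fin n → F := Pi.single 0 (Pi.single c 1)
  set u := convSolution H sol base
  have hker : slidingParity n k hk H j *ᵥ blockVec u j = 0 := funext fun a => by
    obtain ⟨⟨r, i⟩, rfl⟩ := finProdFinEquiv.surjective a
    rw [slidingParity_mulVec_blockVec, convSolution_conv_eq_zero H sol base hsol]
    rfl
  have hfirst : blockVec u j (finProdFinEquiv (0, c)) = 1 := by
    rw [blockVec_finProdFinEquiv]
    exact (convSolution_apply_of_notMem H sol base hsol_supp hc 0).trans (by simp [base])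
  have hwt : hammingNorm (blockVec u j) ≤ (j + 1) * (n - k) + 1 := calc
    hammingNorm (blockVec u j) = ∑ p : Fin (j + 1), hammingNorm (u p) := hammingNorm_blockVec u j
    _ ≤ ∑ p : Fin (j + 1), (#s + hammingNorm (base p)) :=
      sum_le_sum fun p _ => hammingNorm_convSolution_le H sol base hsol_supp p
    _ = (j + 1) * #s + 1 := by
      simp [sum_add_distrib, Fin.sum_univ_succ, base, hammingNorm_pi_single c one_ne_zero]
    _ ≤ (j + 1) * (n - k) + 1 := by gcongr
  refine (Nat.sInf_le ?_).trans (hammingWt_eq_hammingNorm (blockVec u j) ▸ hwt)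
  exact ⟨blockVec u j, hker, ⟨finProdFinEquiv (0, c), by simp, hfirst ▸ one_ne_zero⟩, rfl⟩
end

section
/- Let r ≥ 1 and let S_r be the r×r lower triangular Toeplitz matrix over the integers with (i,j) entry equal to the binomial coefficient C(r−1, i−j) for i ≥ j and 0 otherwise. Then every square submatrix of S_r with sorted row indices i_1 < ... < i_s and column indices j_1 < ... < j_s satisfying j_t ≤ i_t for all t has strictly positive determinant as an integer matrix. -/
namespace Stmt15Aux

/-- Toeplitz binomial entry. -/
def tmat (n : ℕ) (i j : ℕ) : ℤ := if j ≤ i then (n.choose (i - j) : ℤ) else 0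

lemma tmat_zero (i j : ℕ) : tmat 0 i j = if i = j then 1 else 0 := by
  unfold tmat
  rcases lt_trichotomy i j with h | h | h
  · simp [Nat.not_le.mpr h, h.ne]
  · simp [h]
  · have h1 : j ≤ i := h.le
    have h2 : i - j ≠ 0 := Nat.sub_ne_zero_of_lt h
    rcases Nat.exists_eq_succ_of_ne_zero h2 with ⟨k, hk⟩
    simp [h1, hk, h.ne']

lemma tmat_pascal (n i j : ℕ) :
    tmat (n+1) i j = (if i = 0 then 0 else tmat n (i-1) j) + tmat n i j := by
  by_cases hi : i = 0
  · subst hi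
    unfold tmat
    rcases Nat.eq_zero_or_pos j with hj | hj
    · subst hj; simp
    · simp [Nat.not_le.mpr hj]
  · obtain ⟨m, rfl⟩ := Nat.exists_eq_succ_of_ne_zero (by omega : i ≠ 0)
    rw [if_neg (Nat.succ_ne_zero m)]
    have hsub : m + 1 - 1 = m := by omega
    rw [hsub]
    unfold tmat
    rcases lt_trichotomy j (m+1) with h | h | h
    · have hjm : j ≤ m := Nat.lt_succ_iff.mp h
      have h1 : j ≤ m + 1 := h.le
      have h2 : m + 1 - j = (m - j) + 1 := by omega
      simp only [h1, if_true, hjm, if_true, h2, Nat.choose_succ_succ]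
      push_cast
      ring
    · subst h
      simp
    · have h1 : ¬ j ≤ m + 1 := Nat.not_le.mpr h
      have h2 : ¬ j ≤ m := by omega
      simp [h1, h2]

lemma det_id {s : ℕ} (ri : Fin s → ℕ) (hri : StrictMono ri) :
    (Matrix.of fun a b => tmat 0 (ri a) (ri b)).det = 1 := by
  have : (Matrix.of fun a b => tmat 0 (ri a) (ri b)) = 1 := by
    ext a b
    rw [Matrix.of_apply, tmat_zero, Matrix.one_apply]
    simp [hri.injective.eq_iff]
  rw [this, Matrix.det_one]

lemma nonneg_zero {s : ℕ} (ri ci : Fin s → ℕ) (hri : StrictMono ri) (hci : StrictMono ci) :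
    0 ≤ (Matrix.of fun a b => tmat 0 (ri a) (ci b)).det := by
  by_cases hrc : ri = ci
  · subst hrc; rw [det_id ri hri]; norm_num
  · have hex : ∃ a, ∀ b, ri a ≠ ci b := by
      by_contra hc
      push_neg at hc
      have hsub : Finset.image ri Finset.univ ⊆ Finset.image ci Finset.univ := by
        intro x hx
        simp only [Finset.mem_image, Finset.mem_univ, true_and] at hx ⊢
        obtain ⟨a, rfl⟩ := hx
        obtain ⟨b, hb⟩ := hc a
        exact ⟨b, hb.symm⟩
      have hcard : (Finset.image ci Finset.univ).card ≤ (Finset.image ri Finset.univ).card := by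
        rw [Finset.card_image_of_injective _ hci.injective,
          Finset.card_image_of_injective _ hri.injective]
      have heq := Finset.eq_of_subset_of_card_le hsub hcard
      have hrange : Set.range ri = Set.range ci := by
        rw [← Set.image_univ, ← Set.image_univ, ← Finset.coe_univ, ← Finset.coe_image,
          ← Finset.coe_image, heq]
      have hwf : WellFoundedLT (Fin s) := inferInstance
      exact hrc ((hri.range_inj hci).mp hrange)
    obtain ⟨a, ha⟩ := hex
    refine le_of_eq (Matrix.det_eq_zero_of_row_eq_zero a fun b => ?_).symm
    rw [Matrix.of_apply, tmat_zero, if_neg (ha b)]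

/-- One row of the (n+1) matrix, decomposed by a boolean choice. -/
def rowf (n : ℕ) {s : ℕ} (ri ci : Fin s → ℕ) (a : Fin s) (c : Bool) : Fin s → ℤ :=
  fun b => if c then (if ri a = 0 then 0 else tmat n (ri a - 1) (ci b)) else tmat n (ri a) (ci b)

lemma det_expand (n : ℕ) {s : ℕ} (ri ci : Fin s → ℕ) :
    (Matrix.of fun a b => tmat (n+1) (ri a) (ci b)).det
      = ∑ g : Fin s → Bool,
          (Matrix.of fun a b => rowf n ri ci a (g a) b).det := by
  classical
  have h1 : (Matrix.of fun a b => tmat (n+1) (ri a) (ci b))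
      = fun a => ∑ c : Bool, rowf n ri ci a c := by
    funext a b
    have := tmat_pascal n (ri a) (ci b)
    simp only [Fintype.sum_bool, Matrix.of_apply, Pi.add_apply, rowf]
    simpa using this
  show Matrix.detRowAlternating _ = _
  rw [h1]
  exact (Matrix.detRowAlternating (R := ℤ) (n := Fin s)).toMultilinearMap.map_sum
    (g := fun a c => rowf n ri ci a c)

lemma summand_nonneg (n : ℕ)
    (IH : ∀ (s : ℕ) (ri ci : Fin s → ℕ), StrictMono ri → StrictMono ci →
      0 ≤ (Matrix.of fun a b => tmat n (ri a) (ci b)).det)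
    {s : ℕ} (ri ci : Fin s → ℕ) (hri : StrictMono ri) (hci : StrictMono ci)
    (g : Fin s → Bool) :
    0 ≤ (Matrix.of fun a b => rowf n ri ci a (g a) b).det := by
  classical
  by_cases hz : ∃ a, g a = true ∧ ri a = 0
  · obtain ⟨a, hga, hra⟩ := hz
    refine le_of_eq (Matrix.det_eq_zero_of_row_eq_zero a fun b => ?_).symm
    simp [rowf, hga, hra]
  · push_neg at hz
    set k : Fin s → ℕ := fun a => if g a then ri a - 1 else ri a with hk
    have hmat : (Matrix.of fun a b => rowf n ri ci a (g a) b)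
        = (Matrix.of fun a b => tmat n (k a) (ci b)) := by
      ext a b
      simp only [Matrix.of_apply, rowf, hk]
      cases hga : g a with
      | false => simp
      | true => simp [hz a hga]
    rw [hmat]
    have hmono : ∀ a a' : Fin s, a < a' → k a ≤ k a' := by
      intro a a' h
      have := hri h
      simp only [hk]
      split <;> split <;> omega
    by_cases hsm : StrictMono k
    · exact IH s k ci hsm hci
    · simp only [StrictMono] at hsm
      push_neg at hsm
      obtain ⟨a, a', hlt, hnlt⟩ := hsm
      have heq : k a = k a' := le_antisymm (hmono a a' hlt) hnlt
      refine le_of_eq (Matrix.det_zero_of_row_eq (ne_of_lt hlt) ?_).symm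
      funext b
      simp only [Matrix.of_apply, heq]

lemma main (n : ℕ) :
    (∀ (s : ℕ) (ri ci : Fin s → ℕ), StrictMono ri → StrictMono ci →
      0 ≤ (Matrix.of fun a b => tmat n (ri a) (ci b)).det) ∧
    (∀ (s : ℕ) (ri ci : Fin s → ℕ), StrictMono ri → StrictMono ci →
      (∀ t, ci t ≤ ri t) → (∀ t, ri t ≤ ci t + n) →
      0 < (Matrix.of fun a b => tmat n (ri a) (ci b)).det) := by
  induction n with
  | zero =>
    refine ⟨fun s ri ci hri hci => nonneg_zero ri ci hri hci, ?_⟩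
    intro s ri ci hri hci hlb hub
    have hrc : ri = ci := by
      funext t
      have h1 := hlb t
      have h2 := hub t
      omega
    subst hrc
    rw [det_id ri hri]
    norm_num
  | succ n ih =>
    obtain ⟨ihn, ihp⟩ := ih
    constructor
    · intro s ri ci hri hci
      rw [det_expand]
      exact Finset.sum_nonneg fun g _ => summand_nonneg n ihn ri ci hri hci g
    · intro s ri ci hri hci hlb hub
      classical
      rw [det_expand]
      set g0 : Fin s → Bool := fun a => decide (ci a < ri a) with hg0
      set k0 : Fin s → ℕ := fun a => if ci a < ri a then ri a - 1 else ri a with hk0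
      have hmatch : (Matrix.of fun a b => rowf n ri ci a (g0 a) b)
          = Matrix.of fun a b => tmat n (k0 a) (ci b) := by
        ext a b
        simp only [Matrix.of_apply, rowf, hg0, hk0]
        by_cases hca : ci a < ri a
        · have hne : ri a ≠ 0 := by omega
          simp [hca, hne]
        · simp [hca]
      have hk0sm : StrictMono k0 := by
        intro a a' h
        have h1 := hri h
        have h2 := hci h
        have h3 := hlb a
        have h4 := hlb a'
        simp only [hk0]
        split <;> split <;> omega
      have hk0lb : ∀ t, ci t ≤ k0 t := by
        intro t
        have h3 := hlb t
        simp only [hk0]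
        split <;> omega
      have hk0ub : ∀ t, k0 t ≤ ci t + n := by
        intro t
        have h3 := hlb t
        have h4 := hub t
        simp only [hk0]
        split <;> omega
      have hpos0 : 0 < (Matrix.of fun a b => rowf n ri ci a (g0 a) b).det := by
        rw [hmatch]
        exact ihp s k0 ci hk0sm hci hk0lb hk0ub
      refine lt_of_lt_of_le hpos0 ?_
      exact Finset.single_le_sum
        (fun g _ => summand_nonneg n ihn ri ci hri hci g) (Finset.mem_univ g0)

end Stmt15Aux

theorem stmt15 (r : ℕ) (hr : 1 ≤ r) (s : ℕ)
    (ri ci : Fin s → Fin r) (hri : StrictMono ri) (hci : StrictMono ci)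
    (h : ∀ t, (ci t : ℕ) ≤ (ri t : ℕ)) :
    0 < ((Matrix.of fun i j : Fin r =>
          if (j : ℕ) ≤ (i : ℕ) then ((r - 1).choose ((i : ℕ) - (j : ℕ)) : ℤ)
          else 0).submatrix ri ci).det := by
  have hri' : StrictMono (fun t => (ri t : ℕ)) := fun a b hab => by
    exact_mod_cast hri hab
  have hci' : StrictMono (fun t => (ci t : ℕ)) := fun a b hab => by
    exact_mod_cast hci hab
  have hub : ∀ t, (ri t : ℕ) ≤ (ci t : ℕ) + (r - 1) := by
    intro t
    have := (ri t).isLt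
    omega
  have key := (Stmt15Aux.main (r - 1)).2 s (fun t => (ri t : ℕ)) (fun t => (ci t : ℕ))
    hri' hci' h hub
  have hmx : ((Matrix.of fun i j : Fin r =>
          if (j : ℕ) ≤ (i : ℕ) then ((r - 1).choose ((i : ℕ) - (j : ℕ)) : ℤ)
          else 0).submatrix ri ci)
      = Matrix.of fun a b => Stmt15Aux.tmat (r - 1) ((ri a : ℕ)) ((ci b : ℕ)) := rfl
  rw [hmx]
  exact key
end
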